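/- arXiv:2112.03454 — 5 statements merged into one kernel-verified Lean document; each statement's English description precedes it below -/
import Mathlib

section
/- For finite random variables ω and y with joint distribution p(ω,y), and any positive function g(ω,j), the negative cross-entropy-style quantity E_{(ω,y)~p(ω,y)}[log( g(ω,y) / Σ_{j=1}^N g(ω,j) )] is at most the mutual information I(y;ω). -/
open Finset

/-- Mutual information of a joint pmf on a product of finite sets (natural log). -/
noncomputable def mutualInfo {A B : Type*} [Fintype A] [Fintype B] (p : A → B → ℝ) : ℝ :=
  ∑ a, ∑ b, p a b * Real.log (p a b / ((∑ b', p a b') * (∑ a', p a' b)))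

/-!
Put `q(ω, y) = p(ω) p(y) g(ω, y) / ∑ⱼ g(ω, j)`. Since `p(y) ≤ 1` and the softmax weights of `g`
sum to one, `q` has total mass at most `1`. The pointwise Fenchel–Young inequality
`a log x ≤ a log (a / c) + (c x - a)` (the finite Donsker–Varadhan bound), applied with
`a = p(ω, y)`, `c = p(ω) p(y)` and `x = g(ω, y) / ∑ⱼ g(ω, j)` and summed, bounds the left-hand
side by `I(y; ω) + (∑ q - 1) ≤ I(y; ω)`.
-/

namespace Real

theorem mul_log_le_mul_log_div_add_mul_sub {a c x : ℝ} (ha : 0 ≤ a) (hc : 0 < c) (hx : 0 < x) :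
    a * log x ≤ a * log (a / c) + (c * x - a) := by
  rcases ha.eq_or_lt with rfl | ha
  · simpa using (mul_pos hc hx).le
  have hlog : log x - log (a / c) = log (c * x / a) := by
    rw [← log_div hx.ne' (by positivity)]
    congr 1
    field_simp
  have hgibbs : a * log (c * x / a) ≤ a * (c * x / a - 1) :=
    mul_le_mul_of_nonneg_left (log_le_sub_one_of_pos (by positivity)) ha.le
  calc a * log x = a * log (a / c) + a * log (c * x / a) := by rw [← hlog]; ring
    _ ≤ a * log (a / c) + a * (c * x / a - 1) := by gcongr
    _ = a * log (a / c) + (c * x - a) := by field_simp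

end Real

section Marginals

variable {α β : Type*} [Fintype α] [Fintype β]

theorem sum_div_sum_eq_one [Nonempty β] {g : β → ℝ} (hg : ∀ b, 0 < g b) :
    ∑ b, g b / ∑ b', g b' = 1 := by
  rw [← sum_div, div_self (sum_pos (fun b _ => hg b) univ_nonempty).ne']

theorem marginal_le_one {p : α → β → ℝ} (hp : ∀ a b, 0 ≤ p a b) (hsum : ∑ a, ∑ b, p a b = 1)
    (b : β) : ∑ a, p a b ≤ 1 :=
  hsum ▸ sum_le_sum fun a _ => single_le_sum (fun b' _ => hp a b') (mem_univ b)

theorem sum_marginal_mul_marginal_mul_softmax_le_one [Nonempty β] {p : α → β → ℝ}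
    (hp : ∀ a b, 0 ≤ p a b) (hsum : ∑ a, ∑ b, p a b = 1) {g : α → β → ℝ} (hg : ∀ a b, 0 < g a b) :
    ∑ a, ∑ b, (∑ b', p a b') * (∑ a', p a' b) * (g a b / ∑ b', g a b') ≤ 1 := by
  have hrow : ∀ a, ∑ b, (∑ b', p a b') * (∑ a', p a' b) * (g a b / ∑ b', g a b') ≤ ∑ b', p a b' :=
    fun a => calc
      _ ≤ ∑ b, (∑ b', p a b') * 1 * (g a b / ∑ b', g a b') := by
        gcongr with b
        · exact (div_pos (hg a b) (sum_pos (fun b' _ => hg a b') univ_nonempty)).le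
        · exact sum_nonneg fun b' _ => hp a b'
        · exact marginal_le_one hp hsum b
      _ = ∑ b', p a b' := by rw [mul_one, ← mul_sum, sum_div_sum_eq_one (hg a), mul_one]
  exact hsum ▸ sum_le_sum fun a _ => hrow a

end Marginals

/-- Theorem 1 of the paper: the negative cross-entropy-style quantity lower-bounds
mutual information. -/
theorem crossEntropy_le_mutualInfo {Ω : Type*} [Fintype Ω] {N : ℕ} (hN : 0 < N)
    (p : Ω → Fin N → ℝ) (hp : ∀ ω y, 0 ≤ p ω y) (hsum : ∑ ω, ∑ y, p ω y = 1)
    (hmargΩ : ∀ ω, 0 < ∑ y, p ω y) (hmargY : ∀ y, 0 < ∑ ω, p ω y)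
    (g : Ω → Fin N → ℝ) (hg : ∀ ω y, 0 < g ω y) :
    ∑ ω, ∑ y, p ω y * Real.log (g ω y / ∑ j, g ω j) ≤ mutualInfo p := by
  have : Nonempty (Fin N) := ⟨⟨0, hN⟩⟩
  set q : Ω → Fin N → ℝ := fun ω y => (∑ j, p ω j) * (∑ ω', p ω' y) * (g ω y / ∑ j, g ω j)
  have hq : ∑ ω, ∑ y, q ω y ≤ 1 := sum_marginal_mul_marginal_mul_softmax_le_one hp hsum hg
  calc ∑ ω, ∑ y, p ω y * Real.log (g ω y / ∑ j, g ω j)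
      ≤ ∑ ω, ∑ y, (p ω y * Real.log (p ω y / ((∑ j, p ω j) * (∑ ω', p ω' y)))
          + (q ω y - p ω y)) := by
        gcongr with ω _ y _
        exact Real.mul_log_le_mul_log_div_add_mul_sub (hp ω y) (mul_pos (hmargΩ ω) (hmargY y))
          (div_pos (hg ω y) (sum_pos (fun j _ => hg ω j) univ_nonempty))
    _ = mutualInfo p + (∑ ω, ∑ y, q ω y - 1) := by
        simp only [sum_add_distrib, sum_sub_distrib, hsum, mutualInfo]
    _ ≤ mutualInfo p := by linarith
end

section
/- The Donsker–Varadhan bound: for finite random variables X and Z with joint pmf p(x,z) and any real-valued function G(x,z), E_{p(x,z)}[G(x,z)] − log E_{p(x)p(z)}[exp(G(x,z))] ≤ I(X;Z). -/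
open Finset

lemma gibbs_aux {ι : Type*} (s : Finset ι) (w a : ι → ℝ)
    (hw : ∀ i ∈ s, 0 ≤ w i) (ha : ∀ i ∈ s, 0 < a i) (hw1 : ∑ i ∈ s, w i = 1) :
    ∑ i ∈ s, w i * Real.log (a i / w i) ≤ Real.log (∑ i ∈ s, a i) := by
  classical
  set t := s.filter (fun i => 0 < w i) with ht
  have hts : t ⊆ s := filter_subset _ _
  have hwt : ∀ i ∈ t, 0 < w i := fun i hi => (mem_filter.mp hi).2
  have hw1t : ∑ i ∈ t, w i = 1 := by
    rw [← hw1]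
    apply Finset.sum_filter_of_ne
    intro i hi h
    exact lt_of_le_of_ne (hw i hi) (Ne.symm h)
  have hLHS : ∑ i ∈ s, w i * Real.log (a i / w i)
      = ∑ i ∈ t, w i * Real.log (a i / w i) := by
    symm
    apply Finset.sum_filter_of_ne
    intro i hi h
    rcases (hw i hi).lt_or_eq with hlt | heq
    · exact hlt
    · exact absurd (by rw [← heq]; ring) h
  rw [hLHS]
  have jensen := strictConcaveOn_log_Ioi.concaveOn.le_map_sum
    (t := t) (w := w) (p := fun i => a i / w i)
    (fun i hi => (hwt i hi).le) hw1t
    (fun i hi => Set.mem_Ioi.mpr (div_pos (ha i (hts hi)) (hwt i hi)))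
  simp only [smul_eq_mul] at jensen
  have hsum_t : ∑ i ∈ t, w i * (a i / w i) = ∑ i ∈ t, a i := by
    apply Finset.sum_congr rfl
    intro i hi
    rw [mul_comm, div_mul_cancel₀ _ (hwt i hi).ne']
  rw [hsum_t] at jensen
  refine jensen.trans (Real.log_le_log ?_ ?_)
  · have hne : t.Nonempty := by
      by_contra h
      rw [not_nonempty_iff_eq_empty] at h
      rw [h] at hw1t; simp at hw1t
    obtain ⟨i, hi⟩ := hne
    exact Finset.sum_pos' (fun j hj => (ha j (hts hj)).le) ⟨i, hi, ha i (hts hi)⟩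
  · exact Finset.sum_le_sum_of_subset_of_nonneg hts (fun i hi _ => (ha i hi).le)

/-- Donsker–Varadhan variational lower bound on mutual information. -/
theorem donsker_varadhan {X Z : Type*} [Fintype X] [Fintype Z]
    (p : X → Z → ℝ) (hp : ∀ x z, 0 ≤ p x z) (hsum : ∑ x, ∑ z, p x z = 1)
    (hmargX : ∀ x, 0 < ∑ z, p x z) (hmargZ : ∀ z, 0 < ∑ x, p x z)
    (G : X → Z → ℝ) :
    (∑ x, ∑ z, p x z * G x z) -
      Real.log (∑ x, ∑ z, (∑ z', p x z') * (∑ x', p x' z) * Real.exp (G x z))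
      ≤ mutualInfo p := by
  classical
  set m : X → Z → ℝ := fun x z => (∑ z', p x z') * (∑ x', p x' z) with hm
  have hmpos : ∀ x z, 0 < m x z := fun x z => mul_pos (hmargX x) (hmargZ z)
  set a : X × Z → ℝ := fun i => m i.1 i.2 * Real.exp (G i.1 i.2) with hadef
  have key := gibbs_aux (Finset.univ : Finset (X × Z)) (fun i => p i.1 i.2) a
    (fun i _ => hp i.1 i.2)
    (fun i _ => mul_pos (hmpos i.1 i.2) (Real.exp_pos _))
    (by rw [Fintype.sum_prod_type]; exact hsum)
  have hptwise : ∀ i : X × Z,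
      p i.1 i.2 * Real.log (a i / p i.1 i.2)
        = p i.1 i.2 * G i.1 i.2 - p i.1 i.2 * Real.log (p i.1 i.2 / m i.1 i.2) := by
    intro i
    rcases eq_or_lt_of_le (hp i.1 i.2) with h | h
    · simp [← h]
    · have hane : a i ≠ 0 := (mul_pos (hmpos i.1 i.2) (Real.exp_pos _)).ne'
      rw [Real.log_div hane h.ne', hadef]
      simp only []
      rw [Real.log_mul (hmpos i.1 i.2).ne' (Real.exp_ne_zero _), Real.log_exp,
        Real.log_div h.ne' (hmpos i.1 i.2).ne']
      ring
  rw [Finset.sum_congr rfl (fun i _ => hptwise i)] at key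
  rw [Finset.sum_sub_distrib] at key
  have hS : (∑ i : X × Z, a i)
      = ∑ x, ∑ z, (∑ z', p x z') * (∑ x', p x' z) * Real.exp (G x z) := by
    rw [Fintype.sum_prod_type]
  have hG : (∑ i : X × Z, p i.1 i.2 * G i.1 i.2) = ∑ x, ∑ z, p x z * G x z := by
    rw [Fintype.sum_prod_type]
  have hMI : (∑ i : X × Z, p i.1 i.2 * Real.log (p i.1 i.2 / m i.1 i.2)) = mutualInfo p := by
    rw [Fintype.sum_prod_type]; rfl
  rw [hS, hG, hMI] at key
  linarith
end

section
/- The CLUB estimator is an upper bound on mutual information: for finite random variables X and ω with joint pmf p(x,ω) and true conditional p(x|ω), I_CLUB(X;ω) := E_{p(x,ω)}[log p(x|ω)] − E_{p(x)p(ω)}[log p(x|ω)] satisfies I(X;ω) ≤ I_CLUB(X;ω). -/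
/-!
The gap `I_CLUB - I` equals `∑ ω, p(ω) · KL(p(x) ‖ p(x|ω))`: splitting the logarithms, the terms
`p(x,ω) log p(x|ω)` cancel, and `∑ ω, p(x,ω) log p(x) = ∑ ω, p(x) p(ω) log p(x)` because `p(ω)`
sums to one. Each divergence is nonnegative by Gibbs' inequality, i.e. `log t ≤ t - 1`.
-/

open Finset

/-- The CLUB estimator (with the true conditional `p(x|ω) = p(x,ω)/p(ω)`). -/
noncomputable def clubMI {X W : Type*} [Fintype X] [Fintype W] (p : X → W → ℝ) : ℝ :=
  (∑ x, ∑ w, p x w * Real.log (p x w / ∑ x', p x' w)) -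
    ∑ x, ∑ w, (∑ w', p x w') * (∑ x', p x' w) * Real.log (p x w / ∑ x', p x' w)

open Real

theorem mul_log_div_le_sub {q r : ℝ} (hq : 0 ≤ q) (hr : 0 < r) : q * log (r / q) ≤ r - q := by
  rcases hq.eq_or_lt with rfl | hq
  · simpa using hr.le
  calc q * log (r / q) ≤ q * (r / q - 1) :=
        mul_le_mul_of_nonneg_left (log_le_sub_one_of_pos (div_pos hr hq)) hq.le
    _ = r - q := by field_simp

theorem sum_mul_log_div_nonneg {ι : Type*} {s : Finset ι} {q r : ι → ℝ}
    (hq : ∀ i ∈ s, 0 ≤ q i) (hr : ∀ i ∈ s, 0 < r i) (hrq : ∑ i ∈ s, r i ≤ ∑ i ∈ s, q i) :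
    0 ≤ ∑ i ∈ s, q i * log (q i / r i) := by
  have : ∑ i ∈ s, q i * log (r i / q i) ≤ ∑ i ∈ s, (r i - q i) :=
    sum_le_sum fun i hi ↦ mul_log_div_le_sub (hq i hi) (hr i hi)
  simp only [← inv_div (r _), log_inv, mul_neg, sum_neg_distrib, sum_sub_distrib] at this ⊢
  linarith

theorem clubMI_sub_mutualInfo {X W : Type*} [Fintype X] [Fintype W] {p : X → W → ℝ}
    (hp : ∀ x w, 0 < p x w) (hsum : ∑ x, ∑ w, p x w = 1) :
    clubMI p - mutualInfo p = ∑ w, (∑ x', p x' w) *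
      ∑ x, (∑ w', p x w') * log ((∑ w', p x w') / (p x w / ∑ x', p x' w)) := by
  have hX (x : X) (w : W) : 0 < ∑ w', p x w' := sum_pos (fun w _ ↦ hp x w) ⟨w, mem_univ w⟩
  have hW (x : X) (w : W) : 0 < ∑ x', p x' w := sum_pos (fun x _ ↦ hp x w) ⟨x, mem_univ x⟩
  have hWsum : ∑ w, ∑ x', p x' w = 1 := by rw [sum_comm, hsum]
  have hmi : mutualInfo p = ∑ x, ∑ w, (p x w * log (p x w / ∑ x', p x' w)
      - p x w * log (∑ w', p x w')) := by
    refine sum_congr rfl fun x _ ↦ sum_congr rfl fun w _ ↦ ?_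
    rw [div_mul_eq_div_div_swap, log_div (div_pos (hp x w) (hW x w)).ne' (hX x w).ne', mul_sub]
  have hkl : ∑ w, (∑ x', p x' w) *
      ∑ x, (∑ w', p x w') * log ((∑ w', p x w') / (p x w / ∑ x', p x' w)) =
      ∑ x, ∑ w, ((∑ w', p x w') * (∑ x', p x' w) * log (∑ w', p x w')
        - (∑ w', p x w') * (∑ x', p x' w) * log (p x w / ∑ x', p x' w)) := by
    rw [sum_comm]
    refine sum_congr rfl fun w _ ↦ (mul_sum _ _ _).trans (sum_congr rfl fun x _ ↦ ?_)
    rw [log_div (hX x w).ne' (div_pos (hp x w) (hW x w)).ne']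
    ring
  have hmarg : ∑ x, ∑ w, p x w * log (∑ w', p x w') =
      ∑ x, ∑ w, (∑ w', p x w') * (∑ x', p x' w) * log (∑ w', p x w') := by
    refine sum_congr rfl fun x _ ↦ ?_
    simp only [← sum_mul, mul_right_comm _ _ (log _), ← mul_sum, hWsum, mul_one]
  rw [clubMI, hmi, hkl]
  simp only [sum_sub_distrib] at hmarg ⊢
  linarith

/-- CLUB upper-bounds the true mutual information. -/
theorem mutualInfo_le_club {X W : Type*} [Fintype X] [Fintype W]
    (p : X → W → ℝ) (hp : ∀ x w, 0 < p x w) (hsum : ∑ x, ∑ w, p x w = 1) :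
    mutualInfo p ≤ clubMI p := by
  rw [← sub_nonneg, clubMI_sub_mutualInfo hp hsum]
  refine sum_nonneg fun w _ ↦ mul_nonneg (sum_nonneg fun x _ ↦ (hp x w).le) ?_
  refine sum_mul_log_div_nonneg (fun x _ ↦ (sum_nonneg fun w _ ↦ (hp x w).le))
    (fun x _ ↦ div_pos (hp x w) (sum_pos (fun x _ ↦ hp x w) ⟨x, mem_univ x⟩)) ?_
  rw [← sum_div, hsum]
  exact div_self_le_one _
end

section
/- The gap between the CLUB estimator and the true mutual information equals the expected KL divergence of the marginal from the conditional: I_CLUB(X;ω) − I(X;ω) = Σ_ω p(ω) · KL(p(·) ‖ p(·|ω)). -/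
open Finset

/-- The gap between CLUB and the true mutual information is the expected KL
divergence of the marginal `p(·)` from the conditional `p(·|ω)`. -/
theorem club_sub_mutualInfo_eq_expected_kl {X W : Type*} [Fintype X] [Fintype W]
    (p : X → W → ℝ) (hp : ∀ x w, 0 < p x w) (hsum : ∑ x, ∑ w, p x w = 1) :
    clubMI p - mutualInfo p =
      ∑ w, (∑ x', p x' w) *
        ∑ x, (∑ w', p x w') * Real.log ((∑ w', p x w') / (p x w / ∑ x', p x' w)) := by
  have hW : Nonempty W := by
    by_contra h
    rw [not_nonempty_iff] at h
    simp at hsum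
  have hX : Nonempty X := by
    by_contra h
    rw [not_nonempty_iff] at h
    simp at hsum
  have hpx : ∀ x, (0:ℝ) < ∑ w', p x w' :=
    fun x => Finset.sum_pos (fun w _ => hp x w) Finset.univ_nonempty
  have hpw : ∀ w, (0:ℝ) < ∑ x', p x' w :=
    fun w => Finset.sum_pos (fun x _ => hp x w) Finset.univ_nonempty
  have hsum' : ∑ w, ∑ x', p x' w = 1 := by rw [Finset.sum_comm]; exact hsum
  have key : ∀ x w, Real.log (p x w / ((∑ w', p x w') * (∑ x', p x' w))) =
      Real.log (p x w / ∑ x', p x' w) - Real.log (∑ w', p x w') := by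
    intro x w
    rw [mul_comm, ← div_div, Real.log_div (div_ne_zero (ne_of_gt (hp x w)) (ne_of_gt (hpw w)))
      (ne_of_gt (hpx x))]
  have keyR : ∀ x w, Real.log ((∑ w', p x w') / (p x w / ∑ x', p x' w)) =
      Real.log (∑ w', p x w') - Real.log (p x w / ∑ x', p x' w) := fun x w =>
    Real.log_div (ne_of_gt (hpx x)) (div_ne_zero (ne_of_gt (hp x w)) (ne_of_gt (hpw w)))
  unfold mutualInfo clubMI
  simp only [key, keyR]
  simp only [mul_sub, Finset.sum_sub_distrib]
  have h1 : ∑ x, ∑ w, p x w * Real.log (∑ w', p x w')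
      = ∑ x, (∑ w', p x w') * Real.log (∑ w', p x w') := by
    refine Finset.sum_congr rfl fun x _ => ?_
    rw [← Finset.sum_mul]
  have hK : ∑ w, (∑ x', p x' w) * ∑ x, (∑ w', p x w') * Real.log (∑ w', p x w')
      = ∑ x, (∑ w', p x w') * Real.log (∑ w', p x w') := by
    rw [← Finset.sum_mul, hsum', one_mul]
  have hD : ∑ x, ∑ w, (∑ w', p x w') * (∑ x', p x' w) * Real.log (p x w / ∑ x', p x' w)
      = ∑ w, (∑ x', p x' w) * ∑ x, (∑ w', p x w') * Real.log (p x w / ∑ x', p x' w) := by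
    rw [Finset.sum_comm]
    refine Finset.sum_congr rfl fun w _ => ?_
    rw [Finset.mul_sum]
    exact Finset.sum_congr rfl fun x _ => by ring
  rw [h1, hK, hD]
  ring
end

section
/- The softmax cross-entropy loss lower-bounds mutual information up to log N: for finite ω and label y ∈ {1,...,N} uniformly distributed, and any scores G(ω,j), E_{p(ω,y)}[G(ω,y)] − log E_{p(ω)}[(1/N)Σ_j e^{G(ω,j)}] − log N ≤ I(y;ω). -/
/-! The Donsker–Varadhan bound `E_p[g] - log E_q[e^g] ≤ KL(p ‖ q)` for finite weights: with
`Z = ∑ q e^g`, each term `p log (q e^g / (Z p)) ≤ q e^g / Z - p` by `log x ≤ x - 1`, and the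
right-hand sides sum to `1 - 1 = 0`. Applied to `p(ω, y)` against `q(ω, y) = p(ω) / N`, the
KL divergence is the mutual information because the label marginal is uniform, and the
extra `- log N` only loosens the bound. -/

open Finset

namespace Real

theorem mul_log_div_le_sub {a u : ℝ} (ha : 0 ≤ a) (hu : 0 < u) : a * log (u / a) ≤ u - a := by
  rcases ha.eq_or_lt with rfl | ha
  · simpa using hu.le
  calc a * log (u / a) ≤ a * (u / a - 1) :=
        mul_le_mul_of_nonneg_left (log_le_sub_one_of_pos (by positivity)) ha.le
    _ = u - a := by field_simp

theorem mul_sub_log_div_sub_log_le {a b g Z : ℝ} (ha : 0 ≤ a) (hb : 0 ≤ b)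
    (hab : 0 < a → 0 < b) (hZ : 0 < Z) :
    a * (g - log (a / b) - log Z) ≤ b * exp g / Z - a := by
  rcases ha.eq_or_lt with rfl | ha
  · simp only [zero_mul, sub_zero]
    positivity
  have hb := hab ha
  have hlog : g - log (a / b) - log Z = log (b * exp g / Z / a) := by
    rw [log_div (by positivity) ha.ne', log_div (by positivity) hZ.ne',
      log_mul hb.ne' (exp_pos g).ne', log_exp, log_div ha.ne' hb.ne']
    ring
  rw [hlog]
  exact mul_log_div_le_sub ha.le (by positivity)

theorem sum_mul_sub_log_sum_mul_exp_le {ι : Type*} [Fintype ι] (p q g : ι → ℝ)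
    (hp : ∀ i, 0 ≤ p i) (hp_sum : ∑ i, p i = 1) (hq : ∀ i, 0 ≤ q i)
    (hpq : ∀ i, 0 < p i → 0 < q i) :
    ∑ i, p i * g i - log (∑ i, q i * exp (g i)) ≤ ∑ i, p i * log (p i / q i) := by
  set Z := ∑ i, q i * exp (g i)
  have hZ : 0 < Z := by
    obtain ⟨i, -, hi⟩ := exists_lt_of_sum_lt (by simp [hp_sum] : ∑ i, (0 : ℝ) < ∑ i, p i)
    exact lt_of_lt_of_le (mul_pos (hpq i hi) (exp_pos _))
      (single_le_sum (fun j _ => mul_nonneg (hq j) (exp_pos _).le) (mem_univ i))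
  have hterms : ∑ i, p i * (g i - log (p i / q i) - log Z) ≤ ∑ i, (q i * exp (g i) / Z - p i) :=
    sum_le_sum fun i _ => mul_sub_log_div_sub_log_le (hp i) (hq i) (hpq i) hZ
  rw [sum_sub_distrib, ← sum_div, hp_sum, div_self hZ.ne', sub_self] at hterms
  simp only [mul_sub, sum_sub_distrib, ← sum_mul, hp_sum, one_mul] at hterms
  linarith

end Real

theorem softmax_xent_le_mutualInfo_general {Ω : Type*} [Fintype Ω] {N : ℕ}
    (p : Ω → Fin N → ℝ) (hp : ∀ ω y, 0 ≤ p ω y) (hsum : ∑ ω, ∑ y, p ω y = 1)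
    (huniform : ∀ y, ∑ ω, p ω y = 1 / N)
    (G : Ω → Fin N → ℝ) :
    (∑ ω, ∑ y, p ω y * G ω y) -
        Real.log (∑ ω, (∑ y', p ω y') * ((1 / N : ℝ) * ∑ j, Real.exp (G ω j))) -
        Real.log N
      ≤ mutualInfo p := by
  set q : Ω → Fin N → ℝ := fun ω _ => (∑ y', p ω y') * (1 / N)
  have hq : ∀ ω y, 0 ≤ q ω y := fun ω _ =>
    mul_nonneg (sum_nonneg fun y _ => hp ω y) (by positivity)
  have hpq : ∀ ω y, 0 < p ω y → 0 < q ω y := fun ω y hpos =>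
    mul_pos (hpos.trans_le (single_le_sum (fun y' _ => hp ω y') (mem_univ y)))
      (one_div_pos.mpr (Nat.cast_pos.mpr (Fin.pos y)))
  have hpartition : ∑ ω, (∑ y', p ω y') * ((1 / N : ℝ) * ∑ j, Real.exp (G ω j))
      = ∑ ω, ∑ y, q ω y * Real.exp (G ω y) := by
    simp only [q, mul_sum, mul_assoc]
  have hMI : mutualInfo p = ∑ ω, ∑ y, p ω y * Real.log (p ω y / q ω y) := by
    simp only [mutualInfo, huniform, q]
  have hDV := Real.sum_mul_sub_log_sum_mul_exp_le (fun x : Ω × Fin N => p x.1 x.2)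
    (fun x => q x.1 x.2) (fun x => G x.1 x.2) (fun x => hp x.1 x.2)
    (by rwa [Fintype.sum_prod_type]) (fun x => hq x.1 x.2) (fun x => hpq x.1 x.2)
  simp only [Fintype.sum_prod_type] at hDV
  rw [hpartition, hMI]
  linarith [Real.log_natCast_nonneg N]

/-- Softmax cross-entropy lower-bounds mutual information up to `log N`
(uniform labels): the intermediate Donsker–Varadhan inequality. -/
theorem softmax_xent_le_mutualInfo {Ω : Type*} [Fintype Ω] {N : ℕ} (hN : 0 < N)
    (p : Ω → Fin N → ℝ) (hp : ∀ ω y, 0 ≤ p ω y) (hsum : ∑ ω, ∑ y, p ω y = 1)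
    (hmargΩ : ∀ ω, 0 < ∑ y, p ω y)
    (huniform : ∀ y, ∑ ω, p ω y = 1 / N)
    (G : Ω → Fin N → ℝ) :
    (∑ ω, ∑ y, p ω y * G ω y) -
        Real.log (∑ ω, (∑ y', p ω y') * ((1 / N : ℝ) * ∑ j, Real.exp (G ω j))) -
        Real.log N
      ≤ mutualInfo p :=
  softmax_xent_le_mutualInfo_general p hp hsum huniform G
end
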